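/- Let C be a pure normal simplicial complex of dimension d−1, let S be the vertex set of a facet of C, and let F0 be an ordered facet of C whose ordering is admissible with respect to S. Then there exists a monotone conservative path towards S that starts at F0 and whose last facet is the facet with vertex set S. -/

import Mathlib

/-! Common definitions: pure simplicial complexes (represented by their facet sets),
vertex-distance, links, ordered facets, vectors of distances, admissibility, and
monotone/conservative dual paths, following Adiprasito–Benedetti's combinatorial
segments. -/

open scoped Classical

noncomputable section

namespace MCP

variable {V : Type} [DecidableEq V] [Fintype V]

/-- The vertex set of the complex whose set of facets is `C`. -/
def verts (C : Finset (Finset V)) : Finset V := C.sup id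

/-- `f` is a face of the pure complex with facet set `C`. -/
def IsFace (C : Finset (Finset V)) (f : Finset V) : Prop := ∃ F ∈ C, f ⊆ F

/-- `C` is pure of dimension `d - 1`: every facet has `d` vertices. -/
def Pure (C : Finset (Finset V)) (d : ℕ) : Prop := ∀ F ∈ C, F.card = d

/-- The 1-skeleton of the complex: two vertices are joined iff they lie in a common facet. -/
def skeleton (C : Finset (Finset V)) : SimpleGraph V where
  Adj u v := u ≠ v ∧ ∃ F ∈ C, u ∈ F ∧ v ∈ F
  symm := ⟨by
    rintro u v ⟨h, F, hF, hu, hv⟩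
    exact ⟨h.symm, F, hF, hv, hu⟩⟩
  loopless := ⟨by rintro u ⟨h, -⟩; exact h rfl⟩

/-- Two facets are adjacent in the dual graph iff they differ in a single vertex. -/
def AdjFacets (F G : Finset V) : Prop :=
  F ≠ G ∧ F.card = G.card ∧ (F ∩ G).card + 1 = F.card

/-- A dual path: a list of facets of `C` in which consecutive facets are adjacent. -/
def IsDualPath (C : Finset (Finset V)) (P : List (Finset V)) : Prop :=
  (∀ F ∈ P, F ∈ C) ∧ P.Chain' AdjFacets

/-- `C` is normal: for every face `f`, any two facets containing `f` are joined by a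
dual path all of whose facets contain `f`. -/
def Normal (C : Finset (Finset V)) : Prop :=
  ∀ f : Finset V, ∀ F ∈ C, ∀ G ∈ C, f ⊆ F → f ⊆ G →
    ∃ P : List (Finset V), P.head? = some F ∧ P.getLast? = some G ∧
      (∀ H ∈ P, H ∈ C ∧ f ⊆ H) ∧ P.Chain' AdjFacets

/-- The (facet set of the) link of a vertex `x` in `C`. -/
def link (C : Finset (Finset V)) (x : V) : Finset (Finset V) :=
  (C.filter (fun F => x ∈ F)).image (fun F => F.erase x)

/-- Vertex-distance (in the 1-skeleton) between two sets of vertices, with value `⊤`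
if one of the sets is empty, and with the special `0/1` convention when the complex
is `0`-dimensional. -/
def vdistSets (C : Finset (Finset V)) (S T : Finset V) : ℕ∞ :=
  if C.sup Finset.card ≤ 1 then
    (if S.Nonempty ∧ T.Nonempty then (if (S ∩ T).Nonempty then 0 else 1) else ⊤)
  else ⨅ u ∈ S, ⨅ v ∈ T, (skeleton C).edist u v

/-- The derived target set `S'` in the link of `x`, used in the recursive definitions
of the vector of distances and of admissibility. -/
def targetSet (C : Finset (Finset V)) (x : V) (S : Finset V) : Finset V :=
  if x ∈ S then S ∩ verts (link C x)
  else (verts (link C x)).filter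
    (fun w => vdistSets C {w} S + 1 = vdistSets C {x} S)

/-- The vector of distances from an ordered facet (a list of vertices) to a target set. -/
def distVector : Finset (Finset V) → List V → Finset V → List ℕ∞
  | _, [], _ => []
  | C, x :: rest, S => vdistSets C {x} S :: distVector (link C x) rest (targetSet C x S)

/-- Admissibility of an ordering of a facet with respect to a target set: the first
vertex realizes the vertex-distance from the facet to the target set, and recursively
in the link. -/
def Admissible : Finset (Finset V) → List V → Finset V → Prop
  | _, [], _ => True
  | C, x :: rest, S =>
      vdistSets C {x} S = vdistSets C (x :: rest).toFinset S ∧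
      Admissible (link C x) rest (targetSet C x S)

/-- An ordered facet of `C`: a repetition-free list of vertices forming a facet. -/
def IsOrderedFacet (C : Finset (Finset V)) (L : List V) : Prop :=
  L.Nodup ∧ L.toFinset ∈ C

/-- A dual path of ordered facets. -/
def IsOrderedDualPath (C : Finset (Finset V)) (Γ : List (List V)) : Prop :=
  (∀ L ∈ Γ, IsOrderedFacet C L) ∧
  Γ.Chain' (fun L M => AdjFacets L.toFinset M.toFinset)

/-- A path of ordered facets is monotone towards `S` if its vectors of distances are
strictly lexicographically decreasing. -/
def MonotonePath (C : Finset (Finset V)) (S : Finset V) (Γ : List (List V)) : Prop :=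
  Γ.Chain' (fun L M => List.Lex (· < ·) (distVector C M S) (distVector C L S))

/-- The index of a step: the least position at which the two orderings differ. -/
def stepIndex (L M : List V) : ℕ := sInf {k : ℕ | L[k]? ≠ M[k]?}

/-- The step from `L` to `M` is conservative towards `S`: the removed vertex is the last
vertex of `L`, and `M` is admissibly ordered with maximum index among all admissible
reorderings. -/
def ConservativeStep (C : Finset (Finset V)) (S : Finset V) (L M : List V) : Prop :=
  (∃ x, L.getLast? = some x ∧ L.toFinset \ M.toFinset = {x}) ∧
  Admissible C M S ∧
  ∀ M' : List V, M'.Perm M → Admissible C M' S → stepIndex L M' ≤ stepIndex L M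

/-- A path of ordered facets is conservative towards `S` if its first facet is
admissibly ordered and every step is conservative. -/
def ConservativePath (C : Finset (Finset V)) (S : Finset V) (Γ : List (List V)) : Prop :=
  (∀ L ∈ Γ.head?, Admissible C L S) ∧ Γ.Chain' (ConservativeStep C S)

/-- A monotone conservative dual path of ordered facets towards `S`. -/
def MonoConsPath (C : Finset (Finset V)) (S : Finset V) (Γ : List (List V)) : Prop :=
  IsOrderedDualPath C Γ ∧ MonotonePath C S Γ ∧ ConservativePath C S Γ

/-- The path `Γ` starts at the facet `F`. -/
def StartsAt (Γ : List (List V)) (F : Finset V) : Prop :=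
  ∃ L, Γ.head? = some L ∧ L.toFinset = F

/-- The path `Γ` ends at the facet `F`. -/
def EndsAt (Γ : List (List V)) (F : Finset V) : Prop :=
  ∃ L, Γ.getLast? = some L ∧ L.toFinset = F

/-- `C` is flag: every set of vertices of `C` pairwise joined by edges of `C` is a face. -/
def Flag (C : Finset (Finset V)) : Prop :=
  ∀ T : Finset V, T ⊆ verts C →
    (∀ u ∈ T, ∀ v ∈ T, u ≠ v → (skeleton C).Adj u v) → IsFace C T

/-- A critical clique: a clique of the 1-skeleton that becomes a face after removing a
suitable vertex. -/
def CriticalClique (C : Finset (Finset V)) (T : Finset V) : Prop :=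
  (∀ u ∈ T, ∀ v ∈ T, u ≠ v → (skeleton C).Adj u v) ∧ ∃ v ∈ T, IsFace C (T.erase v)

/-- `C` is `k`-banner: every critical clique with at least `k + 1` vertices is a face. -/
def Banner (C : Finset (Finset V)) (k : ℕ) : Prop :=
  ∀ T : Finset V, CriticalClique C T → k + 1 ≤ T.card → IsFace C T

/-- A pure `(d-1)`-complex is a pseudomanifold (possibly with boundary) if every
`(d-2)`-dimensional face lies in at most two facets. -/
def Pseudomanifold (C : Finset (Finset V)) (d : ℕ) : Prop :=
  ∀ f : Finset V, f.card + 1 = d → IsFace C f → (C.filter (fun F => f ⊆ F)).card ≤ 2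

/-- A pure `(d-1)`-complex is a pseudomanifold without boundary if every
`(d-2)`-dimensional face lies in exactly two facets. -/
def PseudomanifoldNoBoundary (C : Finset (Finset V)) (d : ℕ) : Prop :=
  ∀ f : Finset V, f.card + 1 = d → IsFace C f → (C.filter (fun F => f ⊆ F)).card = 2

/-- The join of two complexes (given by their facet sets, on disjoint vertex sets). -/
def join (C₁ C₂ : Finset (Finset V)) : Finset (Finset V) :=
  (C₁ ×ˢ C₂).image (fun p => p.1 ∪ p.2)

/-- The one-point-suspension of `C` at the vertex `v`; the two new suspension vertices
are `Sum.inr false` and `Sum.inr true`. -/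
def ops (C : Finset (Finset V)) (v : V) : Finset (Finset (V ⊕ Bool)) :=
  ((C.filter (fun F => v ∈ F)).image
      (fun F => ((F.erase v).image Sum.inl) ∪ {Sum.inr false, Sum.inr true}))
  ∪ ((C.filter (fun F => v ∉ F)).image (fun F => (F.image Sum.inl) ∪ {Sum.inr false}))
  ∪ ((C.filter (fun F => v ∉ F)).image (fun F => (F.image Sum.inl) ∪ {Sum.inr true}))

/-- The degree of a vertex in the 1-skeleton of `C`. -/
def degree (C : Finset (Finset V)) (x : V) : ℕ :=
  (Finset.univ.filter fun w => (skeleton C).Adj x w).card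

/-- Vertex-decomposability of a pure complex given by its facet set: either a single
simplex, or there is a vertex whose deletion stays pure of the same dimension and whose
link and deletion are both vertex-decomposable.  (The condition
`∀ F ∈ C, ∃ G ∈ C, x ∉ G ∧ F.erase x ⊆ G` expresses that the deletion of `x` is pure
of the same dimension, so that its facets are the facets of `C` avoiding `x`.) -/
inductive VertexDecomposable : Finset (Finset V) → Prop
  | simplex (F : Finset V) : VertexDecomposable {F}
  | step (C : Finset (Finset V)) (x : V) (hx : x ∈ verts C)
      (hdelpure : ∀ F ∈ C, ∃ G ∈ C, x ∉ G ∧ F.erase x ⊆ G)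
      (hlink : VertexDecomposable (link C x))
      (hdel : VertexDecomposable (C.filter (fun F => x ∉ F))) :
      VertexDecomposable C

/-- The maximum length (number of steps) of a monotone conservative path in `C`, over
all nonempty target sets of vertices of `C`. -/
def maxl (C : Finset (Finset V)) : ℕ :=
  sSup {n : ℕ | ∃ (S : Finset V) (Γ : List (List V)), S.Nonempty ∧ S ⊆ verts C ∧
    MonoConsPath C S Γ ∧ Γ.length = n + 1}

/-- `CombSeg C Γ S x₀`: the dual path `Γ` is a combinatorial segment in `C` from its
first facet to the target set `S`, anchored at `x₀` (Adiprasito–Benedetti). -/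
inductive CombSeg : Finset (Finset V) → List (Finset V) → Finset V → V → Prop
  | intersects (C : Finset (Finset V)) (F S : Finset V) (x₀ : V)
      (hF : F ∈ C) (hx : x₀ ∈ F) (hFS : (F ∩ S).Nonempty) :
      CombSeg C [F] S x₀
  | dimOne (C : Finset (Finset V)) (S : Finset V) (x₀ v : V)
      (hdim : ∀ F ∈ C, F.card = 1)
      (h₁ : {x₀} ∈ C) (h₂ : {v} ∈ C) (hx : x₀ ∉ S) (hv : v ∈ S) :
      CombSeg C [{x₀}, {v}] S x₀
  | step (C : Finset (Finset V)) (F₀ : Finset V) (Γ₁ Γ₂ : List (Finset V))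
      (Fk S : Finset V) (x₀ y x₀' : V) (ℓ : ℕ∞)
      (hdim : ∀ F ∈ C, 2 ≤ F.card)
      (hmem : ∀ F ∈ F₀ :: Γ₁, F ∈ C)
      (hdisj : ∀ F ∈ F₀ :: Γ₁, F ∩ S = ∅)
      (hℓ : vdistSets C F₀ S = ℓ)
      (hbefore : ∀ F ∈ F₀ :: Γ₁, ¬ vdistSets C F S < ℓ)
      (hafter : vdistSets C Fk S < ℓ)
      (hy : y ∈ Fk)
      (hyd : vdistSets C {y} S + 1 = ℓ)
      (hyuniq : ∀ z ∈ Fk, vdistSets C {z} S + 1 = ℓ → z = y)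
      (hx₀ : ∀ F ∈ F₀ :: Γ₁, x₀ ∈ F) (hx₀k : x₀ ∈ Fk)
      (hlink : CombSeg (link C x₀)
          (((F₀ :: Γ₁) ++ [Fk]).map (fun F => F.erase x₀))
          ((verts (link C x₀)).filter (fun w => vdistSets C {w} S + 1 = ℓ)) x₀')
      (htail : CombSeg C (Fk :: Γ₂) S y) :
      CombSeg C (F₀ :: Γ₁ ++ Fk :: Γ₂) S x₀

end MCP

/-! Each admissibly ordered facet `F = (x, rest) ≠ S` has a monotone conservative successor,
found by induction on the dimension. If `x ∈ S`, the target set in `lk x` is the facet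
`S ∖ x`, and a step from `rest` in the link lifts to a step from `F` keeping `x` first.
If `F` misses `S`, then `x` is at distance `n + 1` and the target set `S'` in `lk x` consists
of its neighbours at distance `n`; the inductive step `rest → M'` in the link either meets
`S'`, so that the facet `x ∪ M'` is strictly closer to `S` and its admissible ordering of
maximal index is a valid step, or avoids `S'`, so that `x ∪ M'` stays at distance `n + 1`
and `x :: M'` is admissible. In both cases the vector of distances drops lexicographically;
as there are finitely many ordered facets, iterating ends at `S`. -/

namespace MCP

variable {V : Type}

theorem reachable_of_mem_facet {C : Finset (Finset V)} {F : Finset V} {x w : V} (hF : F ∈ C)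
    (hx : x ∈ F) (hw : w ∈ F) : (skeleton C).Reachable x w := by
  rcases eq_or_ne x w with rfl | hne
  · rfl
  · exact SimpleGraph.Adj.reachable ⟨hne, F, hF, hx, hw⟩

theorem stepIndex_cons_cons (x : V) {A B : List V} (h : A ≠ B) :
    stepIndex (x :: A) (x :: B) = stepIndex A B + 1 := by
  obtain ⟨k, hk⟩ : ∃ k, A[k]? ≠ B[k]? := not_forall.mp (mt List.ext_getElem? h)
  have hpos : 1 ≤ stepIndex (x :: A) (x :: B) := by
    refine Nat.one_le_iff_ne_zero.mpr fun h0 => ?_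
    rcases Nat.sInf_eq_zero.mp h0 with h0 | h0
    · exact h0 rfl
    · exact Set.eq_empty_iff_forall_notMem.mp h0 (k + 1) (by simpa using hk)
  unfold stepIndex at hpos ⊢
  rw [← Nat.sInf_add (p := fun k => (x :: A)[k]? ≠ (x :: B)[k]?) hpos]
  simp

theorem stepIndex_cons_cons_of_ne {a b : V} {A B : List V} (h : a ≠ b) :
    stepIndex (a :: A) (b :: B) = 0 :=
  Nat.sInf_eq_zero.mpr (Or.inl (by simpa using h))

variable [DecidableEq V]

section Link

variable {C : Finset (Finset V)} {F G : Finset V} {x w : V}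

theorem mem_verts : w ∈ verts C ↔ ∃ F ∈ C, w ∈ F := by
  simp [verts, Finset.mem_sup]

theorem mem_link : G ∈ link C x ↔ ∃ F ∈ C, x ∈ F ∧ F.erase x = G := by
  simp [link, and_assoc]

theorem erase_mem_link (hF : F ∈ C) (hx : x ∈ F) : F.erase x ∈ link C x :=
  mem_link.mpr ⟨F, hF, hx, rfl⟩

theorem insert_mem_of_mem_link (hG : G ∈ link C x) : insert x G ∈ C ∧ x ∉ G := by
  obtain ⟨F, hF, hx, rfl⟩ := mem_link.mp hG
  rw [Finset.insert_erase hx]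
  exact ⟨hF, Finset.notMem_erase _ _⟩

theorem mem_verts_link : w ∈ verts (link C x) ↔ ∃ F ∈ C, x ∈ F ∧ w ∈ F ∧ w ≠ x := by
  simp only [mem_verts, mem_link]
  constructor
  · rintro ⟨_, ⟨F, hF, hx, rfl⟩, hw⟩
    exact ⟨F, hF, hx, Finset.mem_of_mem_erase hw, Finset.ne_of_mem_erase hw⟩
  · rintro ⟨F, hF, hx, hw, hwx⟩
    exact ⟨_, ⟨F, hF, hx, rfl⟩, Finset.mem_erase.mpr ⟨hwx, hw⟩⟩

theorem mem_verts_link_of_adj (hadj : (skeleton C).Adj x w) : w ∈ verts (link C x) := by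
  obtain ⟨hne, F, hF, hx, hw⟩ := hadj
  exact mem_verts_link.mpr ⟨F, hF, hx, hw, hne.symm⟩

theorem Pure.link {d : ℕ} (h : Pure C d) : Pure (link C x) (d - 1) := by
  intro G hG
  obtain ⟨F, hF, hx, rfl⟩ := mem_link.mp hG
  rw [Finset.card_erase_of_mem hx, h F hF]

theorem AdjFacets.erase (h : AdjFacets F G) (hxF : x ∈ F) (hxG : x ∈ G) :
    AdjFacets (F.erase x) (G.erase x) := by
  obtain ⟨hne, hcard, hinter⟩ := h
  have hxFG : x ∈ F ∩ G := Finset.mem_inter.mpr ⟨hxF, hxG⟩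
  refine ⟨fun he => hne ?_, ?_, ?_⟩
  · rw [← Finset.insert_erase hxF, he, Finset.insert_erase hxG]
  · rw [Finset.card_erase_of_mem hxF, Finset.card_erase_of_mem hxG, hcard]
  · rw [Finset.erase_inter, Finset.inter_erase, Finset.erase_idem, Finset.card_erase_of_mem hxFG,
      Finset.card_erase_of_mem hxF]
    have := Finset.card_pos.mpr ⟨x, hxFG⟩
    omega

theorem AdjFacets.insert (h : AdjFacets F G) (hxF : x ∉ F) (hxG : x ∉ G) :
    AdjFacets (insert x F) (insert x G) := by
  obtain ⟨hne, hcard, hinter⟩ := h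
  refine ⟨fun he => hne ?_, ?_, ?_⟩
  · rw [← Finset.erase_insert hxF, he, Finset.erase_insert hxG]
  · rw [Finset.card_insert_of_notMem hxF, Finset.card_insert_of_notMem hxG, hcard]
  · rw [← Finset.insert_inter_distrib,
      Finset.card_insert_of_notMem fun hx => hxF (Finset.mem_inter.mp hx).1,
      Finset.card_insert_of_notMem hxF, hinter]

theorem Normal.link (h : Normal C) : Normal (link C x) := by
  intro f _ hF' _ hG' hfF hfG
  obtain ⟨F, hF, hxF, rfl⟩ := mem_link.mp hF'
  obtain ⟨G, hG, hxG, rfl⟩ := mem_link.mp hG'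
  have hsub : ∀ {H : Finset V}, x ∈ H → f ⊆ H.erase x → insert x f ⊆ H := fun hx hf =>
    Finset.insert_subset hx (hf.trans (Finset.erase_subset _ _))
  obtain ⟨P, hhead, hlast, hP, hchain⟩ := h (insert x f) F hF G hG (hsub hxF hfF) (hsub hxG hfG)
  have hxP : ∀ H ∈ P, x ∈ H := fun H hH => (hP H hH).2 (Finset.mem_insert_self x f)
  refine ⟨P.map (Finset.erase · x), by simp [hhead], by simp [hlast], ?_, ?_⟩
  · simp only [List.mem_map]
    rintro _ ⟨H, hH, rfl⟩
    refine ⟨erase_mem_link (hP H hH).1 (hxP H hH), fun a ha => ?_⟩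
    exact Finset.mem_erase.mpr ⟨Finset.ne_of_mem_erase (hfF ha),
      (hP H hH).2 (Finset.mem_insert_of_mem ha)⟩
  · exact (List.isChain_map _).mpr
      (hchain.imp_of_mem_imp fun H K hH hK hHK => hHK.erase (hxP H hH) (hxP K hK))

end Link

section VertexDistance

variable {C : Finset (Finset V)} {S T : Finset V} {x w : V}

theorem vdistSets_of_not_le_one (hC : ¬ C.sup Finset.card ≤ 1) :
    vdistSets C T S = ⨅ u ∈ T, ⨅ v ∈ S, (skeleton C).edist u v :=
  if_neg hC

theorem vdistSets_singleton_of_not_le_one (hC : ¬ C.sup Finset.card ≤ 1) :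
    vdistSets C {x} S = ⨅ v ∈ S, (skeleton C).edist x v := by
  simp [vdistSets_of_not_le_one hC]

theorem vdistSets_of_le_one (hC : C.sup Finset.card ≤ 1) (hT : T.Nonempty) (hS : S.Nonempty) :
    vdistSets C T S = if (T ∩ S).Nonempty then 0 else 1 := by
  rw [vdistSets, if_pos hC, if_pos ⟨hT, hS⟩]

theorem vdistSets_empty_right : vdistSets C T ∅ = ⊤ := by
  by_cases hC : C.sup Finset.card ≤ 1
  · simp [vdistSets, hC]
  · simp [vdistSets_of_not_le_one hC]

theorem vdistSets_eq_iInf : vdistSets C T S = ⨅ u ∈ T, vdistSets C {u} S := by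
  by_cases hC : C.sup Finset.card ≤ 1
  · rcases S.eq_empty_or_nonempty with rfl | hS
    · simp [vdistSets_empty_right]
    rcases T.eq_empty_or_nonempty with rfl | hT
    · simp [vdistSets, hC]
    have hsingle : ∀ u, ({u} ∩ S).Nonempty ↔ u ∈ S := fun u => by
      simp [Finset.Nonempty]
    simp only [vdistSets_of_le_one hC (Finset.singleton_nonempty _) hS, hsingle,
      vdistSets_of_le_one hC hT hS]
    split_ifs with hTS
    · obtain ⟨u, hu⟩ := hTS
      rw [Finset.mem_inter] at hu
      exact le_antisymm zero_le ((iInf₂_le u hu.1).trans (by simp [hu.2]))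
    · have hTS' : ∀ u ∈ T, u ∉ S := fun u hu huS => hTS ⟨u, Finset.mem_inter.mpr ⟨hu, huS⟩⟩
      obtain ⟨u, hu⟩ := hT
      exact le_antisymm (le_iInf₂ fun v hv => by simp [hTS' v hv])
        ((iInf₂_le u hu).trans (by simp [hTS' u hu]))
  · simp [vdistSets_of_not_le_one hC]

theorem vdistSets_le_of_mem (hx : x ∈ T) : vdistSets C T S ≤ vdistSets C {x} S := by
  rw [vdistSets_eq_iInf (T := T)]
  exact iInf₂_le x hx

theorem exists_mem_vdistSets_singleton_eq (hT : T.Nonempty) :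
    ∃ u ∈ T, vdistSets C {u} S = vdistSets C T S := by
  obtain ⟨u, hu, h⟩ := T.exists_mem_eq_inf hT (fun u => vdistSets C {u} S)
  exact ⟨u, hu, by rw [vdistSets_eq_iInf (T := T), ← Finset.inf_eq_iInf, h]⟩

theorem vdistSets_empty_left : vdistSets C ∅ S = ⊤ := by
  simp [vdistSets_eq_iInf (T := ∅)]

theorem vdistSets_singleton_eq_zero_iff : vdistSets C {x} S = 0 ↔ x ∈ S := by
  rcases S.eq_empty_or_nonempty with rfl | hS
  · simp [vdistSets_empty_right]
  by_cases hC : C.sup Finset.card ≤ 1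
  · rw [vdistSets_of_le_one hC (Finset.singleton_nonempty x) hS]
    split_ifs with hx
    · simpa [Finset.Nonempty] using hx
    · simpa [Finset.Nonempty] using hx
  · rw [vdistSets_singleton_of_not_le_one hC]
    constructor
    · intro h
      obtain ⟨v, hv, heq⟩ := S.exists_mem_eq_inf hS (fun v => (skeleton C).edist x v)
      rw [Finset.inf_eq_iInf, h, eq_comm, SimpleGraph.edist_eq_zero_iff] at heq
      exact heq ▸ hv
    · intro hx
      exact le_antisymm ((iInf₂_le x hx).trans (by simp)) zero_le

theorem vdistSets_singleton_le_add_one (hC : ¬ C.sup Finset.card ≤ 1)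
    (hadj : (skeleton C).Adj x w) : vdistSets C {x} S ≤ vdistSets C {w} S + 1 := by
  rcases S.eq_empty_or_nonempty with rfl | hS
  · simp [vdistSets_empty_right]
  obtain ⟨v, hv, heq⟩ := S.exists_mem_eq_inf hS (fun v => (skeleton C).edist w v)
  rw [Finset.inf_eq_iInf] at heq
  rw [vdistSets_singleton_of_not_le_one hC, vdistSets_singleton_of_not_le_one hC, heq]
  calc ⨅ v ∈ S, (skeleton C).edist x v ≤ (skeleton C).edist x v := iInf₂_le v hv
    _ ≤ (skeleton C).edist x w + (skeleton C).edist w v := SimpleGraph.edist_triangle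
    _ = (skeleton C).edist w v + 1 := by
      rw [SimpleGraph.edist_eq_one_iff_adj.mpr hadj, add_comm]

theorem exists_adj_vdistSets_singleton_eq (hC : ¬ C.sup Finset.card ≤ 1) {n : ℕ}
    (hx : vdistSets C {x} S = (n + 1 : ℕ)) :
    ∃ w, (skeleton C).Adj x w ∧ vdistSets C {w} S = n := by
  rcases S.eq_empty_or_nonempty with rfl | hS
  · rw [vdistSets_empty_right] at hx
    exact absurd hx.symm (ENat.natCast_ne_top _)
  obtain ⟨v, hv, heq⟩ := S.exists_mem_eq_inf hS (fun v => (skeleton C).edist x v)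
  rw [Finset.inf_eq_iInf] at heq
  have hxv : (skeleton C).edist x v = (n + 1 : ℕ) := by
    rw [← heq, ← vdistSets_singleton_of_not_le_one hC, hx]
  obtain ⟨p, hp⟩ := SimpleGraph.exists_walk_of_edist_eq_coe hxv
  cases p with
  | nil => simp at hp
  | @cons _ w _ hadj q =>
    refine ⟨w, hadj, le_antisymm ?_ ?_⟩
    · rw [vdistSets_singleton_of_not_le_one hC]
      refine (iInf₂_le v hv).trans ((SimpleGraph.edist_le q).trans ?_)
      simp only [SimpleGraph.Walk.length_cons] at hp
      exact_mod_cast (show q.length ≤ n by omega)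
    · have h := vdistSets_singleton_le_add_one (S := S) hC hadj
      rw [hx, Nat.cast_succ] at h
      exact (ENat.add_le_add_iff_right ENat.one_ne_top).mp h

theorem Normal.reachable {d : ℕ} (hn : Normal C) (hpure : Pure C d) (hd : 2 ≤ d)
    (hx : x ∈ verts C) (hw : w ∈ verts C) : (skeleton C).Reachable x w := by
  obtain ⟨Fx, hFx, hxF⟩ := mem_verts.mp hx
  obtain ⟨Fw, hFw, hwF⟩ := mem_verts.mp hw
  obtain ⟨P, hhead, hlast, hP, hchain⟩ :=
    hn ∅ Fx hFx Fw hFw (Finset.empty_subset _) (Finset.empty_subset _)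
  have hchainC : P.IsChain fun F G => F ∈ C ∧ G ∈ C ∧ AdjFacets F G :=
    hchain.imp_of_mem_imp fun F G hF hG h => ⟨(hP F hF).1, (hP G hG).1, h⟩
  refine hchainC.induction (fun F => ∀ u ∈ F, (skeleton C).Reachable x u) P ?_ ?_ Fw
    (List.mem_of_getLast? hlast) w hwF
  · rintro F G ⟨hF, hG, -, -, hFG⟩ hreach u hu
    obtain ⟨z, hz⟩ : (F ∩ G).Nonempty := by
      rw [← Finset.card_pos]
      have := hpure F hF
      omega
    rw [Finset.mem_inter] at hz
    exact (hreach z hz.1).trans (reachable_of_mem_facet hG hz.2 hu)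
  · intro hne u hu
    rw [List.head?_eq_some_head hne, Option.some_inj] at hhead
    exact reachable_of_mem_facet hFx hxF (hhead ▸ hu)

theorem vdistSets_ne_top {d : ℕ} (hn : Normal C) (hpure : Pure C d) (hT : T.Nonempty)
    (hS : S.Nonempty) (hTC : T ⊆ verts C) (hSC : S ⊆ verts C) : vdistSets C T S ≠ ⊤ := by
  by_cases hC : C.sup Finset.card ≤ 1
  · rw [vdistSets_of_le_one hC hT hS]
    split_ifs <;> simp
  obtain ⟨F, hF, hFcard⟩ : ∃ F ∈ C, 1 < F.card := by simpa using hC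
  obtain ⟨u, hu⟩ := hT
  obtain ⟨v, hv⟩ := hS
  have hreach := hn.reachable hpure (by rw [← hpure F hF]; exact hFcard) (hTC hu) (hSC hv)
  rw [vdistSets_of_not_le_one hC]
  exact ne_top_of_le_ne_top (SimpleGraph.edist_ne_top_iff_reachable.mpr hreach)
    ((iInf₂_le u hu).trans (iInf₂_le v hv))

end VertexDistance

section TargetSet

variable {C : Finset (Finset V)} {S G : Finset V} {x w : V}

theorem mem_targetSet_of_notMem (hx : x ∉ S) :
    w ∈ targetSet C x S ↔ w ∈ verts (link C x) ∧ vdistSets C {w} S + 1 = vdistSets C {x} S := by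
  rw [targetSet, if_neg hx, Finset.mem_filter]

theorem targetSet_subset_verts_link : targetSet C x S ⊆ verts (link C x) := by
  unfold targetSet
  split_ifs
  exacts [Finset.inter_subset_right, Finset.filter_subset _ _]

theorem targetSet_eq_erase (hS : S ∈ C) (hx : x ∈ S) : targetSet C x S = S.erase x := by
  rw [targetSet, if_pos hx]
  ext w
  rw [Finset.mem_inter, Finset.mem_erase, mem_verts_link]
  constructor
  · rintro ⟨hw, -, -, -, -, hwx⟩
    exact ⟨hwx, hw⟩
  · rintro ⟨hwx, hw⟩
    exact ⟨hw, S, hS, hx, hw, hwx⟩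

theorem vdistSets_lt_of_mem_targetSet (hx : x ∉ S) (htop : vdistSets C {x} S ≠ ⊤)
    (hw : w ∈ targetSet C x S) : vdistSets C {w} S < vdistSets C {x} S := by
  rw [← ((mem_targetSet_of_notMem hx).mp hw).2] at htop ⊢
  exact (ENat.lt_add_one_iff' (WithTop.add_ne_top.mp htop).1).mpr le_rfl

theorem targetSet_nonempty (hC : ¬ C.sup Finset.card ≤ 1) (hx : x ∉ S)
    (htop : vdistSets C {x} S ≠ ⊤) : (targetSet C x S).Nonempty := by
  obtain ⟨m, hm⟩ := ENat.ne_top_iff_exists.mp htop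
  obtain ⟨n, rfl⟩ : ∃ n, m = n + 1 := Nat.exists_eq_succ_of_ne_zero fun h => hx <|
    vdistSets_singleton_eq_zero_iff.mp (by rw [← hm, h, Nat.cast_zero])
  obtain ⟨w, hadj, hw⟩ := exists_adj_vdistSets_singleton_eq hC hm.symm
  refine ⟨w, (mem_targetSet_of_notMem hx).mpr ⟨mem_verts_link_of_adj hadj, ?_⟩⟩
  rw [hw, ← hm, Nat.cast_succ]

theorem vdistSets_eq_of_forall_notMem_targetSet (hC : ¬ C.sup Finset.card ≤ 1) (hx : x ∉ S)
    (hG : G ∈ C) (hxG : x ∈ G) (h : ∀ u ∈ G, u ≠ x → u ∉ targetSet C x S) :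
    vdistSets C G S = vdistSets C {x} S := by
  refine le_antisymm (vdistSets_le_of_mem hxG) ?_
  rw [vdistSets_eq_iInf (T := G)]
  refine le_iInf₂ fun u hu => ?_
  rcases eq_or_ne u x with rfl | hux
  · exact le_rfl
  have hadj : (skeleton C).Adj x u := ⟨hux.symm, G, hG, hxG, hu⟩
  have hne : vdistSets C {u} S + 1 ≠ vdistSets C {x} S := fun he =>
    h u hu hux ((mem_targetSet_of_notMem hx).mpr ⟨mem_verts_link_of_adj hadj, he⟩)
  by_cases hut : vdistSets C {u} S = ⊤
  · exact hut ▸ le_top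
  exact (ENat.lt_add_one_iff hut).mp
    (lt_of_le_of_ne (vdistSets_singleton_le_add_one hC hadj) hne.symm)

end TargetSet

section Orderings

variable {C : Finset (Finset V)} {S G : Finset V} {x : V} {rest M M' L : List V}

theorem IsOrderedFacet.tail_link (h : IsOrderedFacet C (x :: rest)) :
    IsOrderedFacet (link C x) rest := by
  obtain ⟨hnd, hC⟩ := h
  refine ⟨hnd.of_cons, ?_⟩
  rw [← Finset.erase_insert (mt List.mem_toFinset.mp (List.nodup_cons.mp hnd).1),
    ← List.toFinset_cons]
  exact erase_mem_link hC (by simp)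

theorem IsOrderedFacet.cons_of_link (h : IsOrderedFacet (link C x) M) :
    IsOrderedFacet C (x :: M) := by
  obtain ⟨hC, hx⟩ := insert_mem_of_mem_link h.2
  exact ⟨List.nodup_cons.mpr ⟨mt List.mem_toFinset.mpr hx, h.1⟩, by rwa [List.toFinset_cons]⟩

theorem exists_admissible (C : Finset (Finset V)) (S T : Finset V) :
    ∃ L : List V, L.Nodup ∧ L.toFinset = T ∧ Admissible C L S := by
  induction T using Finset.strongInduction generalizing C S with
  | H T ih =>
    rcases T.eq_empty_or_nonempty with rfl | hT
    · exact ⟨[], List.nodup_nil, rfl, trivial⟩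
    obtain ⟨u, hu, humin⟩ := exists_mem_vdistSets_singleton_eq (C := C) (S := S) hT
    obtain ⟨L, hnd, hL, hadm⟩ := ih (T.erase u) (Finset.erase_ssubset hu) (link C u)
      (targetSet C u S)
    have hT' : (u :: L).toFinset = T := by rw [List.toFinset_cons, hL, Finset.insert_erase hu]
    refine ⟨u :: L, List.nodup_cons.mpr ⟨fun h => ?_, hnd⟩, hT', by rw [hT', humin], hadm⟩
    simpa [hL] using List.mem_toFinset.mpr h

theorem exists_conservativeStep (hL : ∃ y, L.getLast? = some y ∧ L.toFinset \ G = {y}) :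
    ∃ M, M.Nodup ∧ M.toFinset = G ∧ ConservativeStep C S L M := by
  set cands := G.toList.permutations.toFinset.filter (Admissible C · S)
  have hmem : ∀ M, M ∈ cands ↔ M.Perm G.toList ∧ Admissible C M S := by
    simp [cands, List.mem_permutations]
  obtain ⟨M₀, hnd₀, rfl, hadm₀⟩ := exists_admissible C S G
  obtain ⟨M, hM, hmax⟩ := cands.exists_max_image (stepIndex L)
    ⟨M₀, (hmem M₀).mpr ⟨(List.toFinset_toList hnd₀).symm, hadm₀⟩⟩
  obtain ⟨hperm, hadm⟩ := (hmem M).mp hM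
  have hMG : M.toFinset = M₀.toFinset := by
    rw [List.toFinset_eq_of_perm _ _ hperm, Finset.toList_toFinset]
  refine ⟨M, hperm.nodup_iff.mpr (Finset.nodup_toList _), hMG, by rwa [hMG], hadm,
    fun M' hM' hadm' => hmax M' ((hmem M').mpr ⟨hM'.trans hperm, hadm'⟩)⟩

theorem distVector_lex_of_vdistSets_lt (hM : Admissible C M S)
    (h : vdistSets C M.toFinset S < vdistSets C {x} S) :
    List.Lex (· < ·) (distVector C M S) (distVector C (x :: rest) S) := by
  cases M with
  | nil => simp [vdistSets_empty_left] at h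
  | cons a t => exact List.Lex.rel (hM.1 ▸ h)

end Orderings

def MonoConsStep (C : Finset (Finset V)) (S : Finset V) (F M : List V) : Prop :=
  IsOrderedFacet C M ∧ AdjFacets F.toFinset M.toFinset ∧ ConservativeStep C S F M ∧
    List.Lex (· < ·) (distVector C M S) (distVector C F S)

section Steps

variable {C : Finset (Finset V)} {S S' G : Finset V} {x : V} {rest M' : List V}

theorem exists_getLast_sdiff_cons (hx : x ∉ rest)
    (h : ∃ y, rest.getLast? = some y ∧ rest.toFinset \ G = {y}) :
    ∃ y, (x :: rest).getLast? = some y ∧ (x :: rest).toFinset \ insert x G = {y} := by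
  obtain ⟨y, hlast, hdiff⟩ := h
  refine ⟨y, by simp [List.getLast?_cons, hlast], ?_⟩
  rw [List.toFinset_cons, Finset.insert_sdiff_insert,
    Finset.sdiff_insert_of_notMem (mt List.mem_toFinset.mp hx), hdiff]

theorem ConservativeStep.cons (hx : x ∉ rest)
    (h : ConservativeStep (link C x) (targetSet C x S) rest M')
    (hvd : vdistSets C {x} S = vdistSets C (insert x M'.toFinset) S) :
    ConservativeStep C S (x :: rest) (x :: M') := by
  obtain ⟨hlast, hadm, hmax⟩ := h
  have hne : ∀ N : List V, N.toFinset = M'.toFinset → rest ≠ N := by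
    rintro N hN rfl
    obtain ⟨y, -, hy⟩ := hlast
    rw [hN, Finset.sdiff_self] at hy
    exact Finset.singleton_ne_empty y hy.symm
  refine ⟨by simpa using exists_getLast_sdiff_cons hx hlast, ⟨by rwa [List.toFinset_cons], hadm⟩,
    ?_⟩
  rintro (_ | ⟨a, N⟩) hperm hadmN
  · exact absurd hperm.length_eq (by simp)
  rcases eq_or_ne a x with rfl | hax
  · have hN : N.Perm M' := hperm.cons_inv
    rw [stepIndex_cons_cons a (hne N (List.toFinset_eq_of_perm _ _ hN)),
      stepIndex_cons_cons a (hne M' rfl)]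
    exact Nat.succ_le_succ (hmax N hN hadmN.2)
  · rw [stepIndex_cons_cons_of_ne hax.symm]
    exact Nat.zero_le _

theorem MonoConsStep.cons (hF : (x :: rest).Nodup)
    (h : MonoConsStep (link C x) (targetSet C x S) rest M')
    (hvd : vdistSets C {x} S = vdistSets C (insert x M'.toFinset) S) :
    MonoConsStep C S (x :: rest) (x :: M') := by
  obtain ⟨hM', hadj, hcons, hlex⟩ := h
  have hx : x ∉ rest := (List.nodup_cons.mp hF).1
  refine ⟨hM'.cons_of_link, ?_, hcons.cons hx hvd, List.Lex.cons hlex⟩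
  rw [List.toFinset_cons, List.toFinset_cons]
  exact hadj.insert (mt List.mem_toFinset.mp hx) (insert_mem_of_mem_link hM'.2).2

theorem MonoConsStep.exists_of_vdistSets_lt (hF : (x :: rest).Nodup)
    (h : MonoConsStep (link C x) S' rest M')
    (hlt : vdistSets C (insert x M'.toFinset) S < vdistSets C {x} S) :
    ∃ M, MonoConsStep C S (x :: rest) M := by
  obtain ⟨hM', hadj, ⟨hlast, -⟩, -⟩ := h
  obtain ⟨hG, hxM'⟩ := insert_mem_of_mem_link hM'.2
  have hx : x ∉ rest := (List.nodup_cons.mp hF).1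
  obtain ⟨M, hnd, hMG, hcons⟩ := exists_conservativeStep (C := C) (S := S)
    (exists_getLast_sdiff_cons hx hlast)
  rw [← hMG] at hG hlt
  refine ⟨M, ⟨hnd, hG⟩, ?_, hcons, distVector_lex_of_vdistSets_lt hcons.2.1 hlt⟩
  rw [List.toFinset_cons, hMG]
  exact hadj.insert (mt List.mem_toFinset.mp hx) hxM'

theorem MonoConsStep.exists_lift_of_notMem (hF : (x :: rest).Nodup)
    (h : MonoConsStep (link C x) (targetSet C x S) rest M') (hC : ¬ C.sup Finset.card ≤ 1)
    (hxS : x ∉ S) (htop : vdistSets C {x} S ≠ ⊤) : ∃ M, MonoConsStep C S (x :: rest) M := by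
  by_cases hmeet : ∃ w ∈ M'.toFinset, w ∈ targetSet C x S
  · obtain ⟨w, hwM, hwT⟩ := hmeet
    exact h.exists_of_vdistSets_lt hF ((vdistSets_le_of_mem
      (Finset.mem_insert_of_mem hwM)).trans_lt (vdistSets_lt_of_mem_targetSet hxS htop hwT))
  · push Not at hmeet
    refine ⟨x :: M', h.cons hF (vdistSets_eq_of_forall_notMem_targetSet hC hxS
      (insert_mem_of_mem_link h.1.2).1 (Finset.mem_insert_self x _) fun u hu hux => ?_).symm⟩
    exact hmeet u ((Finset.mem_insert.mp hu).resolve_left hux)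

end Steps

section Paths

variable {C : Finset (Finset V)} {S T : Finset V} {x : V} {F : List V}

theorem exists_monoConsStep_singleton (hpure : Pure C 1) (hS : S.Nonempty) (hSC : S ⊆ verts C)
    (hx : x ∉ S) : ∃ M, MonoConsStep C S [x] M := by
  obtain ⟨w, hw⟩ := hS
  obtain ⟨G, hG, hwG⟩ := mem_verts.mp (hSC hw)
  obtain ⟨a, rfl⟩ := Finset.card_eq_one.mp (hpure G hG)
  obtain rfl := Finset.mem_singleton.mp hwG
  have hxw : x ≠ w := fun h => hx (h ▸ hw)
  refine ⟨[w], ⟨List.nodup_singleton w, by simpa using hG⟩, ?_, ⟨⟨x, rfl, ?_⟩, ⟨by simp, trivial⟩,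
    fun M hM _ => by rw [List.perm_singleton.mp hM]⟩, List.Lex.rel ?_⟩
  · simp [AdjFacets, hxw, Finset.singleton_inter_of_notMem, Finset.mem_singleton]
  · simp [Finset.sdiff_singleton_eq_erase, hxw.symm]
  · rw [vdistSets_singleton_eq_zero_iff.mpr hw, pos_iff_ne_zero]
    exact mt vdistSets_singleton_eq_zero_iff.mp hx

theorem exists_monoConsStep_of_disjoint {d : ℕ} (hpure : Pure C d) (hn : Normal C)
    (hS : S.Nonempty) (hSC : S ⊆ verts C) (hF : IsOrderedFacet C F) (hadm : Admissible C F S)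
    (hdisj : Disjoint F.toFinset S) : ∃ M, MonoConsStep C S F M := by
  induction d generalizing C S F with
  | zero =>
    obtain ⟨w, hw⟩ := hS
    obtain ⟨G, hG, hwG⟩ := mem_verts.mp (hSC hw)
    exact absurd (hpure G hG) (Finset.card_ne_zero.mpr ⟨w, hwG⟩)
  | succ d ih =>
    obtain _ | ⟨x, rest⟩ := F
    · exact absurd (hpure _ hF.2) (by simp)
    have hxS : x ∉ S := Finset.disjoint_left.mp hdisj (by simp)
    rcases d with _ | d
    · have hlen := hpure _ hF.2
      rw [List.toFinset_card_of_nodup hF.1] at hlen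
      obtain rfl : rest = [] := by simpa using hlen
      exact exists_monoConsStep_singleton hpure hS hSC hxS
    obtain ⟨hxF, hadm'⟩ := hadm
    have hC : ¬ C.sup Finset.card ≤ 1 := fun h => by
      have := (Finset.le_sup (f := Finset.card) hF.2).trans h
      rw [hpure _ hF.2] at this
      omega
    have htop : vdistSets C {x} S ≠ ⊤ := hxF ▸ vdistSets_ne_top hn hpure ⟨x, by simp⟩ hS
      (fun u hu => mem_verts.mpr ⟨_, hF.2, hu⟩) hSC
    have hdisj' : Disjoint rest.toFinset (targetSet C x S) := by
      refine Finset.disjoint_left.mpr fun u hu hu' => ?_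
      have hlt := vdistSets_lt_of_mem_targetSet hxS htop hu'
      rw [hxF] at hlt
      exact (vdistSets_le_of_mem (by simp [List.mem_toFinset.mp hu])).not_gt hlt
    obtain ⟨_, hM'⟩ := ih (by simpa using hpure.link) hn.link (targetSet_nonempty hC hxS htop)
      targetSet_subset_verts_link hF.tail_link hadm' hdisj'
    exact hM'.exists_lift_of_notMem hF.1 hC hxS htop

theorem exists_monoConsStep_of_ne {d : ℕ} (hpure : Pure C d) (hn : Normal C) (hS : S ∈ C)
    (hF : IsOrderedFacet C F) (hadm : Admissible C F S) (hne : F.toFinset ≠ S) :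
    ∃ M, MonoConsStep C S F M := by
  induction d generalizing C S F with
  | zero =>
    exact absurd ((Finset.card_eq_zero.mp (hpure _ hF.2)).trans
      (Finset.card_eq_zero.mp (hpure _ hS)).symm) hne
  | succ d ih =>
    by_cases hdisj : Disjoint F.toFinset S
    · exact exists_monoConsStep_of_disjoint hpure hn
        (Finset.card_pos.mp (by rw [hpure _ hS]; omega))
        (fun v hv => mem_verts.mpr ⟨S, hS, hv⟩) hF hadm hdisj
    obtain _ | ⟨x, rest⟩ := F
    · simp at hdisj
    obtain ⟨hxF, hadm'⟩ := hadm
    have hx0 : vdistSets C {x} S = 0 := by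
      obtain ⟨u, hu, huS⟩ := Finset.not_disjoint_iff.mp hdisj
      rw [hxF, ← nonpos_iff_eq_zero, ← vdistSets_singleton_eq_zero_iff.mpr huS]
      exact vdistSets_le_of_mem hu
    have hxS : x ∈ S := vdistSets_singleton_eq_zero_iff.mp hx0
    rw [targetSet_eq_erase hS hxS] at hadm'
    obtain ⟨M', hM'⟩ := ih hpure.link hn.link (erase_mem_link hS hxS) hF.tail_link hadm'
      fun h => hne (by rw [List.toFinset_cons, h, Finset.insert_erase hxS])
    rw [← targetSet_eq_erase hS hxS] at hM'
    refine ⟨x :: M', hM'.cons hF.1 ?_⟩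
    rw [hx0, eq_comm, ← nonpos_iff_eq_zero, ← hx0]
    exact vdistSets_le_of_mem (Finset.mem_insert_self x _)

theorem finite_setOf_isOrderedFacet (C : Finset (Finset V)) :
    {L : List V | IsOrderedFacet C L}.Finite := by
  refine (C.biUnion fun F => F.toList.permutations.toFinset).finite_toSet.subset ?_
  rintro L ⟨hnd, hL⟩
  simpa [List.mem_permutations] using ⟨L.toFinset, hL, (List.toFinset_toList hnd).symm⟩

theorem MonoConsPath.cons {M : List V} {Γ : List (List V)} (hΓ : MonoConsPath C S (M :: Γ))
    (hF : IsOrderedFacet C F) (hadm : Admissible C F S) (hM : MonoConsStep C S F M) :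
    MonoConsPath C S (F :: M :: Γ) := by
  obtain ⟨⟨hfacets, hadjs⟩, hmono, -, hcons⟩ := hΓ
  refine ⟨⟨?_, List.isChain_cons_cons.mpr ⟨hM.2.1, hadjs⟩⟩,
    List.isChain_cons_cons.mpr ⟨hM.2.2.2, hmono⟩,
    by simpa using hadm, List.isChain_cons_cons.mpr ⟨hM.2.2.1, hcons⟩⟩
  simpa [hF] using hfacets

theorem exists_monoConsPath_of_forall_exists_step
    (hstep : ∀ F, IsOrderedFacet C F → Admissible C F S → F.toFinset ≠ T →
      ∃ M, MonoConsStep C S F M)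
    (hF : IsOrderedFacet C F) (hadm : Admissible C F S) :
    ∃ Γ, MonoConsPath C S Γ ∧ Γ.head? = some F ∧ EndsAt Γ T := by
  -- `<` on `List ℕ∞` is `List.Lex (· < ·)`, a strict order, hence well founded on a finite set.
  have hwf : {L | IsOrderedFacet C L}.WellFoundedOn
      fun L M => distVector C L S < distVector C M S :=
    Set.wellFoundedOn_image.mp ((finite_setOf_isOrderedFacet C).image _).wellFoundedOn
  refine hwf.induction hF (P := fun F => Admissible C F S →
    ∃ Γ, MonoConsPath C S Γ ∧ Γ.head? = some F ∧ EndsAt Γ T) (fun F hF ih hadm => ?_) hadm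
  by_cases hFT : F.toFinset = T
  · refine ⟨[F], ⟨⟨by simpa using hF, List.isChain_singleton F⟩, List.isChain_singleton F,
      by simpa using hadm, List.isChain_singleton F⟩, rfl, F, rfl, hFT⟩
  obtain ⟨M, hM⟩ := hstep F hF hadm hFT
  obtain ⟨Γ, hΓ, hhead, L, hL, hLT⟩ := ih M hM.1 hM.2.2.2 hM.2.2.1.2.1
  rw [List.eq_cons_of_mem_head? hhead] at hΓ hL
  exact ⟨F :: M :: Γ.tail, hΓ.cons hF hadm hM, rfl, L, by simpa using hL, hLT⟩

end Paths

end MCP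

open MCP in
theorem statement2_general {V : Type} [DecidableEq V] (d : ℕ)
    (C : Finset (Finset V)) (hpure : Pure C d) (hnormal : Normal C)
    (S : Finset V) (hSC : S ∈ C)
    (F₀ : List V) (hF₀ : IsOrderedFacet C F₀) (hadm : Admissible C F₀ S) :
    ∃ Γ : List (List V), MonoConsPath C S Γ ∧ Γ.head? = some F₀ ∧ EndsAt Γ S :=
  exists_monoConsPath_of_forall_exists_step
    (fun _ hF hadmF hne => exists_monoConsStep_of_ne hpure hnormal hSC hF hadmF hne) hF₀ hadm

open MCP in
/-- in a pure normal complex, if the target set `S` is the vertex set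
of a facet, then from any admissibly ordered facet there is a monotone conservative
path towards `S` whose last facet is `S` itself. -/
theorem statement2 {V : Type} [DecidableEq V] [Fintype V] (d : ℕ)
    (C : Finset (Finset V)) (hpure : Pure C d) (hnormal : Normal C)
    (S : Finset V) (hSC : S ∈ C)
    (F₀ : List V) (hF₀ : IsOrderedFacet C F₀) (hadm : Admissible C F₀ S) :
    ∃ Γ : List (List V), MonoConsPath C S Γ ∧ Γ.head? = some F₀ ∧ EndsAt Γ S :=
  statement2_general d C hpure hnormal S hSC F₀ hF₀ hadm
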